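/- Let H be a pre-syndetic subgroup of a skew-amenable topological group G. Then for every d ∈ Δ(G) there exists a right-invariant mean μ on RUCB(G) such that μ(χ_{H,d}) > 0. -/

import Mathlib

open scoped Topology

/-- A mean on the space of real-valued functions satisfying predicate `P`. -/
def IsMean {X : Type*} (P : (X → ℝ) → Prop) (μ : (X → ℝ) → ℝ) : Prop :=
  μ (fun _ => (1 : ℝ)) = 1 ∧
  (∀ f, P f → (∀ x, 0 ≤ f x) → 0 ≤ μ f) ∧
  (∀ f g, P f → P g → μ (fun x => f x + g x) = μ f + μ g) ∧
  (∀ (c : ℝ) (f), P f → μ (fun x => c * f x) = c * μ f)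

/-- `f : G → ℝ` is bounded and right uniformly continuous. -/
def IsRUCB (G : Type*) [Group G] [TopologicalSpace G] (f : G → ℝ) : Prop :=
  (∃ C, ∀ x, |f x| ≤ C) ∧
  ∀ ε : ℝ, 0 < ε → ∃ V ∈ 𝓝 (1 : G), ∀ v ∈ V, ∀ x, |f (v * x) - f x| < ε

/-- A topological group is skew-amenable if there is a right-invariant mean on `RUCB(G)`. -/
def SkewAmenable (G : Type*) [Group G] [TopologicalSpace G] : Prop :=
  ∃ μ : (G → ℝ) → ℝ, IsMean (IsRUCB G) μ ∧
    ∀ (g : G) (f : G → ℝ), IsRUCB G f → μ (fun x => f (x * g)) = μ f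

/-- A subgroup `H ≤ G` is pre-syndetic if for every identity neighbourhood `U`
there is a finite set `E` with `G = EUH`. -/
def PreSyndetic {G : Type*} [Group G] [TopologicalSpace G] (H : Subgroup G) : Prop :=
  ∀ U ∈ 𝓝 (1 : G), ∃ E : Finset G, ∀ g : G, ∃ e ∈ E, ∃ u ∈ U, ∃ h ∈ H, g = e * u * h

/-- `d` is a bounded right-invariant continuous pseudo-metric on `G`. -/
def InDelta (G : Type*) [Group G] [TopologicalSpace G] (d : G → G → ℝ) : Prop :=
  (∀ x y, 0 ≤ d x y) ∧ (∀ x, d x x = 0) ∧ (∀ x y, d x y = d y x) ∧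
  (∀ x y z, d x z ≤ d x y + d y z) ∧ (∃ C, ∀ x y, d x y ≤ C) ∧
  Continuous (fun p : G × G => d p.1 p.2) ∧
  (∀ x y g, d (x * g) (y * g) = d x y)

/-- The function `χ_{H,d}(x) = max (1 - inf_{h ∈ H} d(x,h)) 0`. -/
noncomputable def chi {G : Type*} [Group G] (H : Subgroup G) (d : G → G → ℝ) (x : G) : ℝ :=
  max (1 - ⨅ h : ↥H, d x (h : G)) 0

/-!
Choose the identity neighbourhood `U = {v | d(v, 1) < 1/2}`. On `UH` the function `χ_{H,d}`
is at least `1/2`, so if `G = EUH` with `E` finite, the left translates `x ↦ χ_{H,d}(e⁻¹x)`,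
`e ∈ E`, sum to at least `1/2` everywhere. For a right-invariant mean `μ` one of them therefore
has positive mean, and translating `μ` on the left by that `e⁻¹` keeps it a right-invariant mean.
-/

section IsRUCB

variable {G : Type*} [Group G] [TopologicalSpace G]

lemma isRUCB_const (c : ℝ) : IsRUCB G (fun _ => c) :=
  ⟨⟨|c|, fun _ => le_rfl⟩, fun ε hε => ⟨Set.univ, Filter.univ_mem, by simpa using hε⟩⟩

lemma IsRUCB.add {f g : G → ℝ} (hf : IsRUCB G f) (hg : IsRUCB G g) :
    IsRUCB G (fun x => f x + g x) := by
  obtain ⟨⟨C, hC⟩, hf⟩ := hf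
  obtain ⟨⟨D, hD⟩, hg⟩ := hg
  refine ⟨⟨C + D, fun x => (abs_add_le _ _).trans (add_le_add (hC x) (hD x))⟩, fun ε hε => ?_⟩
  obtain ⟨V, hV, hVf⟩ := hf (ε / 2) (by linarith)
  obtain ⟨W, hW, hWg⟩ := hg (ε / 2) (by linarith)
  refine ⟨V ∩ W, Filter.inter_mem hV hW, fun v hv x => ?_⟩
  calc |f (v * x) + g (v * x) - (f x + g x)|
      = |(f (v * x) - f x) + (g (v * x) - g x)| := by ring_nf
    _ ≤ |f (v * x) - f x| + |g (v * x) - g x| := abs_add_le _ _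
    _ < ε := by linarith [hVf v hv.1 x, hWg v hv.2 x]

lemma isRUCB_sum {ι : Type*} (s : Finset ι) {f : ι → G → ℝ} (hf : ∀ i ∈ s, IsRUCB G (f i)) :
    IsRUCB G (fun x => ∑ i ∈ s, f i x) := by
  classical
  induction s using Finset.induction_on with
  | empty => simpa using isRUCB_const (G := G) 0
  | insert a s ha ih =>
    simp only [Finset.sum_insert ha]
    exact (hf a (s.mem_insert_self a)).add (ih fun i hi => hf i (Finset.mem_insert_of_mem hi))

lemma IsRUCB.comp_mul_left [IsTopologicalGroup G] {f : G → ℝ} (hf : IsRUCB G f) (a : G) :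
    IsRUCB G (fun x => f (a * x)) := by
  obtain ⟨⟨C, hC⟩, hf⟩ := hf
  refine ⟨⟨C, fun x => hC _⟩, fun ε hε => ?_⟩
  obtain ⟨V, hV, hVf⟩ := hf ε hε
  refine ⟨(fun v => a * v * a⁻¹) ⁻¹' V, ?_, fun v hv x => ?_⟩
  · exact (by fun_prop : Continuous fun v : G => a * v * a⁻¹).continuousAt.preimage_mem_nhds
      (by simpa using hV)
  · simpa [mul_assoc] using hVf _ hv (a * x)

end IsRUCB

namespace IsMean

variable {G : Type*} [Group G] [TopologicalSpace G] {μ : (G → ℝ) → ℝ}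

lemma map_const (hμ : IsMean (IsRUCB G) μ) (c : ℝ) : μ (fun _ => c) = c := by
  simpa [hμ.1] using hμ.2.2.2 c _ (isRUCB_const 1)

lemma le_of_forall_le (hμ : IsMean (IsRUCB G) μ) {f : G → ℝ} {c : ℝ} (hf : IsRUCB G f)
    (h : ∀ x, c ≤ f x) : c ≤ μ f := by
  have hg : IsRUCB G (fun x => f x + -c) := hf.add (isRUCB_const _)
  have hsplit := hμ.2.2.1 _ _ hg (isRUCB_const c)
  simp only [neg_add_cancel_right] at hsplit
  have hnonneg : 0 ≤ μ (fun x => f x + -c) := hμ.2.1 _ hg fun x => by linarith [h x]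
  linarith [hμ.map_const c]

lemma map_sum (hμ : IsMean (IsRUCB G) μ) {ι : Type*} (s : Finset ι) {f : ι → G → ℝ}
    (hf : ∀ i ∈ s, IsRUCB G (f i)) : μ (fun x => ∑ i ∈ s, f i x) = ∑ i ∈ s, μ (f i) := by
  classical
  induction s using Finset.induction_on with
  | empty => simpa using hμ.map_const 0
  | insert a s ha ih =>
    have hs : ∀ i ∈ s, IsRUCB G (f i) := fun i hi => hf i (Finset.mem_insert_of_mem hi)
    simp only [Finset.sum_insert ha]
    rw [hμ.2.2.1 _ _ (hf a (s.mem_insert_self a)) (isRUCB_sum s hs), ih hs]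

lemma comp_mul_left [IsTopologicalGroup G] (hμ : IsMean (IsRUCB G) μ) (a : G) :
    IsMean (IsRUCB G) (fun f => μ (fun x => f (a * x))) :=
  ⟨hμ.1, fun _ hf hf0 => hμ.2.1 _ (hf.comp_mul_left a) fun _ => hf0 _,
    fun _ _ hf hg => hμ.2.2.1 _ _ (hf.comp_mul_left a) (hg.comp_mul_left a),
    fun c _ hf => hμ.2.2.2 c _ (hf.comp_mul_left a)⟩

end IsMean

lemma rightInvariant_comp_mul_left {G : Type*} [Group G] [TopologicalSpace G]
    [IsTopologicalGroup G] {μ : (G → ℝ) → ℝ}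
    (hμ : ∀ (g : G) (f : G → ℝ), IsRUCB G f → μ (fun x => f (x * g)) = μ f) (a : G) (g : G)
    (f : G → ℝ) (hf : IsRUCB G f) :
    μ (fun x => f (a * x * g)) = μ (fun x => f (a * x)) := by
  simpa only [mul_assoc] using hμ g _ (hf.comp_mul_left a)

namespace InDelta

variable {G : Type*} [Group G] [TopologicalSpace G] {d : G → G → ℝ}

lemma nonneg (hd : InDelta G d) (x y : G) : 0 ≤ d x y := hd.1 x y

lemma self_eq_zero (hd : InDelta G d) (x : G) : d x x = 0 := hd.2.1 x

lemma symm (hd : InDelta G d) (x y : G) : d x y = d y x := hd.2.2.1 x y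

lemma triangle (hd : InDelta G d) (x y z : G) : d x z ≤ d x y + d y z := hd.2.2.2.1 x y z

lemma mul_right_eq (hd : InDelta G d) (v x : G) : d (v * x) x = d v 1 := by
  simpa using hd.2.2.2.2.2.2 v 1 x

lemma setOf_lt_mem_nhds_one (hd : InDelta G d) {ε : ℝ} (hε : 0 < ε) :
    {v | d v 1 < ε} ∈ 𝓝 (1 : G) := by
  have hcont : Continuous fun v : G => d v 1 :=
    hd.2.2.2.2.2.1.comp (continuous_id.prodMk continuous_const)
  exact hcont.continuousAt.preimage_mem_nhds (by rw [hd.self_eq_zero]; exact Iio_mem_nhds hε)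

lemma isRUCB_of_abs_sub_le (hd : InDelta G d) {f : G → ℝ} (hbdd : ∃ C, ∀ x, |f x| ≤ C)
    (hf : ∀ x y, |f x - f y| ≤ d x y) : IsRUCB G f :=
  ⟨hbdd, fun _ hε => ⟨_, hd.setOf_lt_mem_nhds_one hε, fun v hv x =>
    (hf (v * x) x).trans_lt ((hd.mul_right_eq v x).trans_lt hv)⟩⟩

end InDelta

lemma chi_nonneg {G : Type*} [Group G] (H : Subgroup G) (d : G → G → ℝ) (x : G) :
    0 ≤ chi H d x :=
  le_max_right _ _

section chi

variable {G : Type*} [Group G] [TopologicalSpace G] (H : Subgroup G) {d : G → G → ℝ}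

lemma iInf_le_of_mem (hd : InDelta G d) (x : G) {h : G} (hh : h ∈ H) :
    ⨅ h : H, d x h ≤ d x h :=
  ciInf_le ⟨0, by rintro _ ⟨h', rfl⟩; exact hd.nonneg x h'⟩ (⟨h, hh⟩ : H)

lemma iInf_le_add_iInf (hd : InDelta G d) (x y : G) :
    ⨅ h : H, d x h ≤ d x y + ⨅ h : H, d y h := by
  have : (⨅ h : H, d x h) - d x y ≤ ⨅ h : H, d y h :=
    le_ciInf fun h => by linarith [hd.triangle x y h, iInf_le_of_mem H hd x h.2]
  linarith

lemma abs_chi_sub_le (hd : InDelta G d) (x y : G) : |chi H d x - chi H d y| ≤ d x y := by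
  refine (abs_max_sub_max_le_abs _ _ _).trans (abs_sub_le_iff.2 ⟨?_, ?_⟩)
  · linarith [iInf_le_add_iInf H hd y x, hd.symm x y]
  · linarith [iInf_le_add_iInf H hd x y]

lemma chi_le_one (hd : InDelta G d) (x : G) : chi H d x ≤ 1 :=
  max_le (by linarith [le_ciInf fun h : H => hd.nonneg x h]) zero_le_one

lemma isRUCB_chi (hd : InDelta G d) : IsRUCB G (chi H d) :=
  hd.isRUCB_of_abs_sub_le
    ⟨1, fun x => abs_le.2 ⟨by linarith [chi_nonneg H d x], chi_le_one H hd x⟩⟩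
    (abs_chi_sub_le H hd)

lemma one_sub_le_chi_mul (hd : InDelta G d) (u : G) {h : G} (hh : h ∈ H) :
    1 - d u 1 ≤ chi H d (u * h) := by
  have := iInf_le_of_mem H hd (u * h) hh
  rw [hd.mul_right_eq] at this
  exact le_max_of_le_left (by linarith)

lemma one_half_le_sum_chi_translate (hd : InDelta G d) {E : Finset G}
    (hE : ∀ g : G, ∃ e ∈ E, ∃ u ∈ {v | d v 1 < 1 / 2}, ∃ h ∈ H, g = e * u * h) (g : G) :
    1 / 2 ≤ ∑ e ∈ E, chi H d (e⁻¹ * g) := by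
  obtain ⟨e, he, u, hu, h, hh, rfl⟩ := hE g
  calc (1 : ℝ) / 2 ≤ chi H d (u * h) := by
        linarith [one_sub_le_chi_mul H hd u hh, show d u 1 < 1 / 2 from hu]
    _ = chi H d (e⁻¹ * (e * u * h)) := by group
    _ ≤ ∑ e' ∈ E, chi H d (e'⁻¹ * (e * u * h)) :=
        Finset.single_le_sum (f := fun e' => chi H d (e'⁻¹ * _)) (fun _ _ => chi_nonneg H d _) he

end chi

theorem exists_rightInvariant_mean_chi_pos {G : Type*} [Group G] [TopologicalSpace G]
    [IsTopologicalGroup G] (hG : SkewAmenable G) (H : Subgroup G) (hH : PreSyndetic H)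
    (d : G → G → ℝ) (hd : InDelta G d) :
    ∃ μ : (G → ℝ) → ℝ, IsMean (IsRUCB G) μ ∧
      (∀ (g : G) (f : G → ℝ), IsRUCB G f → μ (fun x => f (x * g)) = μ f) ∧
      0 < μ (chi H d) := by
  obtain ⟨μ, hμ, hinv⟩ := hG
  obtain ⟨E, hE⟩ := hH _ (hd.setOf_lt_mem_nhds_one one_half_pos)
  have htranslate : ∀ e ∈ E, IsRUCB G (fun x => chi H d (e⁻¹ * x)) :=
    fun e _ => (isRUCB_chi H hd).comp_mul_left e⁻¹
  have hsum : 0 < ∑ e ∈ E, μ (fun x => chi H d (e⁻¹ * x)) := by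
    rw [← hμ.map_sum E htranslate]
    exact one_half_pos.trans_le
      (hμ.le_of_forall_le (isRUCB_sum E htranslate) (one_half_le_sum_chi_translate H hd hE))
  obtain ⟨e, -, he⟩ := Finset.exists_lt_of_sum_lt (f := fun _ => (0 : ℝ)) (by simpa using hsum)
  exact ⟨_, hμ.comp_mul_left e⁻¹, rightInvariant_comp_mul_left hinv e⁻¹, he⟩
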